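/- arXiv:2205.09890 — 4 statements merged into one kernel-verified Lean document; each statement's English description precedes it below -/
import Mathlib

section
/- Let K, σ, τ > 0, let Φ be the standard normal cumulative distribution function, let R_x ∈ (0,1) and q ∈ ℝ satisfy Φ(q) = 1 − R_x, and let the reported spot price be S = K·exp(q·σ√τ)·exp(−σ²τ/2). Then R_x = Φ(−d1), where d1 = (ln(S/K) + (σ²/2)τ)/(σ√τ). In other words, the risky reserve of an RMM-01 pool equals the Black-Scholes asset-or-nothing put payoff Φ(−d1) (denominated in the risky asset) at the pool's reported spot price. -/
/-!
The reported spot price is built so that `d1 = q` exactly: the drift `-σ²τ/2` in `S` cancels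
the `+σ²τ/2` in `d1`. Hence `Φ(-d1) = Φ(-q) = 1 - Φ(q) = R_x` by the symmetry of the standard
normal law, whose atomlessness turns `Ici` into `Ioi = (Iic)ᶜ`.
-/

open Real Filter

/-- The cumulative distribution function of the standard normal distribution
(Gaussian measure on ℝ with mean 0 and variance 1). -/
noncomputable def Φ (x : ℝ) : ℝ :=
  (ProbabilityTheory.gaussianReal 0 1 (Set.Iic x)).toReal

open MeasureTheory ProbabilityTheory

theorem measureReal_Iic_neg_of_map_neg_eq_self {μ : Measure ℝ} [IsProbabilityMeasure μ]
    (hμ : μ.map (fun x ↦ -x) = μ) {x : ℝ} (hx : μ {x} = 0) :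
    μ.real (Set.Iic (-x)) = 1 - μ.real (Set.Iic x) := calc
  μ.real (Set.Iic (-x)) = μ.real ((fun x ↦ -x) ⁻¹' Set.Iic (-x)) := by
    conv_lhs => rw [← hμ]
    exact map_measureReal_apply measurable_neg measurableSet_Iic
  _ = μ.real (Set.Ici x) := by simp [Set.preimage, neg_le_neg_iff, Set.Ici]
  _ = μ.real (Set.Iic x)ᶜ := by rw [Set.compl_Iic, measureReal_congr (Ioi_ae_eq_Ici' hx)]
  _ = 1 - μ.real (Set.Iic x) := probReal_compl_eq_one_sub measurableSet_Iic

theorem Φ_neg (x : ℝ) : Φ (-x) = 1 - Φ x :=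
  measureReal_Iic_neg_of_map_neg_eq_self (by simpa using gaussianReal_map_neg (μ := 0) (v := 1))
    (gaussianReal_absolutelyContinuous 0 one_ne_zero (measure_singleton x))

theorem d1_reportedSpot_eq (q s K : ℝ) (hK : K ≠ 0) (hs : s ≠ 0) :
    (Real.log (K * Real.exp (q * s) * Real.exp (-s ^ 2 / 2) / K) + s ^ 2 / 2) / s = q := by
  rw [mul_assoc, mul_div_cancel_left₀ _ hK, ← Real.exp_add, Real.log_exp]
  field_simp
  ring

theorem risky_reserve_is_aonp_general (K σ τ : ℝ) (hK : 0 < K) (hσ : 0 < σ) (hτ : 0 < τ)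
    (Rx : ℝ) (q : ℝ) (hq : Φ q = 1 - Rx)
    (S : ℝ) (hS : S = K * Real.exp (q * (σ * Real.sqrt τ)) * Real.exp (-(σ ^ 2 * τ) / 2))
    (d1 : ℝ) (hd1 : d1 = (Real.log (S / K) + (σ ^ 2 / 2) * τ) / (σ * Real.sqrt τ)) :
    Rx = Φ (-d1) := by
  have hvar : σ ^ 2 * τ = (σ * Real.sqrt τ) ^ 2 := by rw [mul_pow, Real.sq_sqrt hτ.le]
  have hd1q : d1 = q := by
    rw [hd1, hS, div_mul_eq_mul_div, hvar]
    exact d1_reportedSpot_eq q _ K hK.ne' (by positivity)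
  rw [hd1q, Φ_neg, hq]
  ring

/-- The risky reserve of an RMM-01 pool equals the Black--Scholes asset-or-nothing put
payoff Φ(−d1) (denominated in the risky asset) at the pool's reported spot price. -/
theorem risky_reserve_is_aonp (K σ τ : ℝ) (hK : 0 < K) (hσ : 0 < σ) (hτ : 0 < τ)
    (Rx : ℝ) (hRx : Rx ∈ Set.Ioo (0 : ℝ) 1) (q : ℝ) (hq : Φ q = 1 - Rx)
    (S : ℝ) (hS : S = K * Real.exp (q * (σ * Real.sqrt τ)) * Real.exp (-(σ ^ 2 * τ) / 2))
    (d1 : ℝ) (hd1 : d1 = (Real.log (S / K) + (σ ^ 2 / 2) * τ) / (σ * Real.sqrt τ)) :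
    Rx = Φ (-d1) :=
  risky_reserve_is_aonp_general K σ τ hK hσ hτ Rx q hq S hS d1 hd1
end

section
/- Let K, σ, τ > 0 and k ∈ ℝ, let Φ be the standard normal cumulative distribution function, let R_x ∈ (0,1) and q ∈ ℝ satisfy Φ(q) = 1 − R_x, and let the reported spot price be S = K·exp(q·σ√τ)·exp(−σ²τ/2). Then the stable reserve R_y = K·Φ(q − σ√τ) + k satisfies R_y = K·Φ(d2) + k, where d2 = (ln(S/K) − (σ²/2)τ)/(σ√τ). In other words, the stable reserve of an RMM-01 pool equals K times the Black-Scholes cash-or-nothing call payoff Φ(d2), up to the invariant k. -/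
open Real Filter

/-- The stable reserve of an RMM-01 pool equals K times the Black--Scholes
cash-or-nothing call payoff Φ(d2), up to the invariant k. -/
theorem stable_reserve_is_conc (K σ τ : ℝ) (hK : 0 < K) (hσ : 0 < σ) (hτ : 0 < τ) (k : ℝ)
    (Rx : ℝ) (hRx : Rx ∈ Set.Ioo (0 : ℝ) 1) (q : ℝ) (hq : Φ q = 1 - Rx)
    (S : ℝ) (hS : S = K * Real.exp (q * (σ * Real.sqrt τ)) * Real.exp (-(σ ^ 2 * τ) / 2))
    (Ry : ℝ) (hRy : Ry = K * Φ (q - σ * Real.sqrt τ) + k)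
    (d2 : ℝ) (hd2 : d2 = (Real.log (S / K) - (σ ^ 2 / 2) * τ) / (σ * Real.sqrt τ)) :
    Ry = K * Φ d2 + k := by
  have hst : 0 < σ * Real.sqrt τ := mul_pos hσ (Real.sqrt_pos.mpr hτ)
  have hsq : Real.sqrt τ * Real.sqrt τ = τ := Real.mul_self_sqrt hτ.le
  have hlog : Real.log (S / K) = q * (σ * Real.sqrt τ) - σ ^ 2 * τ / 2 := by
    have h1 : S / K = Real.exp (q * (σ * Real.sqrt τ) + -(σ ^ 2 * τ) / 2) := by
      rw [hS, Real.exp_add]; field_simp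
    rw [h1, Real.log_exp]; ring
  have : d2 = q - σ * Real.sqrt τ := by
    rw [hd2, hlog]
    field_simp
    nlinarith [hsq]
  rw [hRy, this]
end

section
/- Fix K, σ, τ > 0 and x > 0, let Φ be the standard normal cumulative distribution function, and for S > 0 set d1(S) = (ln(S/K) + (σ²/2)τ)/(σ√τ), d2(S) = d1(S) − σ√τ and α(S) = x·(K − S)/(K·Φ(−d2(S)) − S·Φ(−d1(S))). Then α(S) tends to x as S tends to 0 from the right. That is, in the limit of the collateral asset price falling to zero, exactly x at-the-money put options fund the collateral shortfall of a position of x collateral units. -/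
open Real Filter

/-! As `S → 0⁺`, `log (S / K) → -∞`, so `d₁, d₂ → -∞` and the put is deep in the money:
`Φ(-d₂) → 1` while `S · Φ(-d₁) → 0` because `Φ` is bounded. Hence `V_put(S) → K`, and
`α(S) → x K / K = x`. -/

open Topology

lemma Phi_nonneg (s : ℝ) : 0 ≤ Φ s := ENNReal.toReal_nonneg

lemma Phi_le_one (s : ℝ) : Φ s ≤ 1 := by
  simpa [Φ] using ENNReal.toReal_le_of_le_ofReal zero_le_one
    (by simpa using MeasureTheory.prob_le_one (μ := ProbabilityTheory.gaussianReal 0 1))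

lemma tendsto_Phi_atTop : Tendsto Φ atTop (𝓝 1) := by
  have h := MeasureTheory.tendsto_measure_Iic_atTop (ProbabilityTheory.gaussianReal 0 1)
  rw [MeasureTheory.measure_univ] at h
  exact (ENNReal.tendsto_toReal ENNReal.one_ne_top).comp h

lemma tendsto_id_nhdsGT_zero : Tendsto (fun S : ℝ => S) (𝓝[>] 0) (𝓝 0) :=
  tendsto_id.mono_left nhdsWithin_le_nhds

lemma tendsto_log_div_add_div_nhdsGT_zero {K b : ℝ} (hK : 0 < K) (hb : 0 < b) (c : ℝ) :
    Tendsto (fun S => (log (S / K) + c) / b) (𝓝[>] 0) atBot := by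
  have hdiv : Tendsto (fun S : ℝ => S / K) (𝓝[>] 0) (𝓝[>] 0) := by
    refine tendsto_nhdsWithin_of_tendsto_nhds_of_eventually_within _ ?_ ?_
    · simpa using tendsto_id_nhdsGT_zero.div_const K
    · filter_upwards [self_mem_nhdsWithin] with S hS using div_pos hS hK
  exact ((tendsto_log_nhdsGT_zero.comp hdiv).atBot_add tendsto_const_nhds).atBot_div_const hb

lemma tendsto_mul_Phi_comp_nhdsGT_zero (f : ℝ → ℝ) :
    Tendsto (fun S => S * Φ (f S)) (𝓝[>] 0) (𝓝 0) :=
  tendsto_id_nhdsGT_zero.zero_mul_isBoundedUnder_le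
    ⟨1, eventually_map.2 (Eventually.of_forall fun S => by
      simpa [abs_of_nonneg (Phi_nonneg _)] using Phi_le_one (f S))⟩

theorem alpha_tendsto_reserve_general (K σ τ x : ℝ) (hK : 0 < K) (hσ : 0 < σ) (hτ : 0 < τ)
    (d1 d2 α : ℝ → ℝ)
    (hd1 : ∀ S, d1 S = (Real.log (S / K) + (σ ^ 2 / 2) * τ) / (σ * Real.sqrt τ))
    (hd2 : ∀ S, d2 S = d1 S - σ * Real.sqrt τ)
    (hα : ∀ S, α S = x * (K - S) / (K * Φ (-(d2 S)) - S * Φ (-(d1 S)))) :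
    Filter.Tendsto α (nhdsWithin 0 (Set.Ioi 0)) (nhds x) := by
  have hd1_bot : Tendsto d1 (𝓝[>] 0) atBot :=
    (tendsto_log_div_add_div_nhdsGT_zero hK (mul_pos hσ (sqrt_pos.2 hτ)) _).congr
      fun S => (hd1 S).symm
  have hd2_bot : Tendsto d2 (𝓝[>] 0) atBot := by
    refine (hd1_bot.atBot_add (tendsto_const_nhds (x := -(σ * sqrt τ)))).congr fun S => ?_
    rw [hd2, sub_eq_add_neg]
  have hput : Tendsto (fun S => K * Φ (-(d2 S)) - S * Φ (-(d1 S))) (𝓝[>] 0) (𝓝 K) := by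
    simpa using ((tendsto_Phi_atTop.comp (tendsto_neg_atBot_atTop.comp hd2_bot)).const_mul K).sub
      (tendsto_mul_Phi_comp_nhdsGT_zero fun S => -(d1 S))
  have hshortfall : Tendsto (fun S => x * (K - S)) (𝓝[>] 0) (𝓝 (x * K)) := by
    simpa using (tendsto_id_nhdsGT_zero.const_sub K).const_mul x
  rw [← mul_div_cancel_right₀ x hK.ne']
  exact (hshortfall.div hput hK.ne').congr fun S => (hα S).symm

/-- As the collateral price S → 0⁺, the put-hedging ratio α(S) = x·(K − S)/V_put(S)
tends to the reserve size x. -/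
theorem alpha_tendsto_reserve (K σ τ x : ℝ) (hK : 0 < K) (hσ : 0 < σ) (hτ : 0 < τ)
    (hx : 0 < x)
    (d1 d2 α : ℝ → ℝ)
    (hd1 : ∀ S, d1 S = (Real.log (S / K) + (σ ^ 2 / 2) * τ) / (σ * Real.sqrt τ))
    (hd2 : ∀ S, d2 S = d1 S - σ * Real.sqrt τ)
    (hα : ∀ S, α S = x * (K - S) / (K * Φ (-(d2 S)) - S * Φ (-(d1 S)))) :
    Filter.Tendsto α (nhdsWithin 0 (Set.Ioi 0)) (nhds x) :=
  alpha_tendsto_reserve_general K σ τ x hK hσ hτ d1 d2 α hd1 hd2 hα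
end

section
/- Fix K, σ, τ > 0 and x > 0, let Φ be the standard normal cumulative distribution function, and for S > 0 set d1(S) = (ln(S/K) + (σ²/2)τ)/(σ√τ), d2(S) = d1(S) − σ√τ and α(S) = x·(K − S)/(K·Φ(−d2(S)) − S·Φ(−d1(S))). Then α is strictly decreasing on (0, ∞): for 0 < S₁ < S₂ one has α(S₂) < α(S₁). -/
/-!
Since `K·φ(d2) = S·φ(d1)`, the density terms cancel in `∂V_put/∂S = -Φ(-d1)`, and the derivative
of `(K - S) / V_put(S)` has numerator `K·(Φ(-d1) - Φ(-d2)) < 0`. It remains to see `V_put > 0`,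
i.e. `Φ(b) < e^{bc + c²/2}·Φ(b + c)` for `c > 0`: the right-hand side increases in `c`, its
derivative being `e^{bc + c²/2}·(φ(b + c) + (b + c)·Φ(b + c))`, and `φ(y) + y·Φ(y) > 0` because it
is increasing (its derivative is `Φ(y)`) and `φ(y) = ∫_{-∞}^y (-t)·φ(t) dt ≥ -y·Φ(y)`.
-/

open Real Filter

open MeasureTheory ProbabilityTheory Set
open scoped Topology

noncomputable def φ (t : ℝ) : ℝ := (√(2 * π))⁻¹ * exp (-t ^ 2 / 2)

lemma gaussianPDFReal_zero_one : gaussianPDFReal 0 1 = φ := by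
  funext t
  simp [gaussianPDFReal, φ]

lemma φ_pos (t : ℝ) : 0 < φ t := by
  rw [← gaussianPDFReal_zero_one]
  exact gaussianPDFReal_pos 0 1 t one_ne_zero

lemma φ_neg (t : ℝ) : φ (-t) = φ t := by simp [φ]

lemma φ_sub_eq_exp_mul (d c : ℝ) : φ (d - c) = exp (d * c - c ^ 2 / 2) * φ d := by
  rw [φ, φ, mul_left_comm, ← exp_add]
  ring_nf

lemma continuous_φ : Continuous φ := by
  unfold φ
  fun_prop

lemma integrable_φ : Integrable φ :=
  gaussianPDFReal_zero_one ▸ integrable_gaussianPDFReal 0 1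

lemma integrable_mul_φ : Integrable fun t ↦ t * φ t := by
  refine ((integrable_mul_exp_neg_mul_sq (b := 1 / 2) (by norm_num)).const_mul
    (√(2 * π))⁻¹).congr (ae_of_all _ fun t ↦ ?_)
  simp only [φ]
  ring_nf

lemma hasDerivAt_φ (t : ℝ) : HasDerivAt φ (-t * φ t) t := by
  have hq : HasDerivAt (fun u : ℝ ↦ -u ^ 2 / 2) (-t) t :=
    ((hasDerivAt_pow 2 t).neg.div_const 2).congr_deriv (by ring)
  exact (hq.exp.const_mul (√(2 * π))⁻¹).congr_deriv (by simp only [φ]; ring)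

lemma tendsto_φ_atBot : Tendsto φ atBot (𝓝 0) := by
  have h : Tendsto (fun t : ℝ ↦ -t ^ 2 / 2) atBot atBot :=
    (tendsto_neg_atTop_atBot.comp <| by
      simpa [Function.comp_def] using
        (tendsto_pow_atTop (α := ℝ) two_ne_zero).comp tendsto_neg_atBot_atTop).atBot_div_const
      two_pos
  have := (tendsto_exp_atBot.comp h).const_mul (√(2 * π))⁻¹
  rw [mul_zero] at this
  exact this

lemma setIntegral_Iic_mul_φ (y : ℝ) : ∫ t in Iic y, t * φ t = -φ y := by
  have h := integral_Iic_of_hasDerivAt_of_tendsto (f := fun t ↦ -φ t) (a := y)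
    continuous_φ.neg.continuousWithinAt
    (fun t _ ↦ (hasDerivAt_φ t).neg.congr_deriv (by ring)) integrable_mul_φ.integrableOn
    (by simpa using tendsto_φ_atBot.neg)
  simpa using h

lemma Φ_eq_setIntegral (x : ℝ) : Φ x = ∫ t in Iic x, φ t := by
  rw [Φ, gaussianReal_apply_eq_integral 0 one_ne_zero, gaussianPDFReal_zero_one,
    ENNReal.toReal_ofReal (setIntegral_nonneg measurableSet_Iic fun t _ ↦ (φ_pos t).le)]

lemma hasDerivAt_Φ (x : ℝ) : HasDerivAt Φ (φ x) x := by
  have h : HasDerivAt (fun u ↦ Φ 0 + ∫ t in (0 : ℝ)..u, φ t) (φ x) x :=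
    (intervalIntegral.integral_hasDerivAt_right integrable_φ.intervalIntegrable
      continuous_φ.stronglyMeasurable.stronglyMeasurableAtFilter
      continuous_φ.continuousAt).const_add _
  convert h using 1
  funext u
  rw [Φ_eq_setIntegral, Φ_eq_setIntegral,
    ← intervalIntegral.integral_Iic_sub_Iic integrable_φ.integrableOn integrable_φ.integrableOn]
  ring

lemma Φ_strictMono : StrictMono Φ :=
  strictMono_of_deriv_pos fun x ↦ (hasDerivAt_Φ x).deriv ▸ φ_pos x

lemma Φ_pos (x : ℝ) : 0 < Φ x :=
  ENNReal.toReal_nonneg.trans_lt (Φ_strictMono (sub_one_lt x))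

lemma φ_add_mul_Φ_nonneg (y : ℝ) : 0 ≤ φ y + y * Φ y := by
  rcases le_or_gt 0 y with hy | hy
  · exact add_nonneg (φ_pos y).le (mul_nonneg hy (Φ_pos y).le)
  · have h : ∫ t in Iic y, -y * φ t ≤ ∫ t in Iic y, -(t * φ t) :=
      setIntegral_mono_on (integrable_φ.integrableOn.const_mul _)
        integrable_mul_φ.neg.integrableOn measurableSet_Iic fun t (ht : t ≤ y) ↦ by
          nlinarith [φ_pos t]
    rw [integral_const_mul, integral_neg, setIntegral_Iic_mul_φ, ← Φ_eq_setIntegral] at h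
    linarith

lemma hasDerivAt_φ_add_mul_Φ (y : ℝ) : HasDerivAt (fun y ↦ φ y + y * Φ y) (Φ y) y :=
  ((hasDerivAt_φ y).add ((hasDerivAt_id y).mul (hasDerivAt_Φ y))).congr_deriv (by simp)

lemma φ_add_mul_Φ_pos (y : ℝ) : 0 < φ y + y * Φ y := by
  have hmono : StrictMono fun y ↦ φ y + y * Φ y :=
    strictMono_of_deriv_pos fun t ↦ (hasDerivAt_φ_add_mul_Φ t).deriv ▸ Φ_pos t
  exact (φ_add_mul_Φ_nonneg (y - 1)).trans_lt (hmono (sub_one_lt y))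

lemma Φ_lt_exp_mul_Φ_add (b : ℝ) {c : ℝ} (hc : 0 < c) :
    Φ b < exp (b * c + c ^ 2 / 2) * Φ (b + c) := by
  have hderiv (t : ℝ) : HasDerivAt (fun t ↦ exp (b * t + t ^ 2 / 2) * Φ (b + t))
      (exp (b * t + t ^ 2 / 2) * (φ (b + t) + (b + t) * Φ (b + t))) t := by
    have hexp : HasDerivAt (fun t ↦ b * t + t ^ 2 / 2) (b + t) t :=
      (((hasDerivAt_id t).const_mul b).add ((hasDerivAt_pow 2 t).div_const 2)).congr_deriv
        (by simp)
    have hΦ := (hasDerivAt_Φ (b + t)).comp t ((hasDerivAt_id t).const_add b)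
    exact (hexp.exp.mul hΦ).congr_deriv (by simp only [Function.comp_apply, mul_one]; ring)
  have hmono : StrictMono fun t ↦ exp (b * t + t ^ 2 / 2) * Φ (b + t) :=
    strictMono_of_deriv_pos fun t ↦
      (hderiv t).deriv ▸ mul_pos (exp_pos _) (φ_add_mul_Φ_pos (b + t))
  simpa using hmono hc

section BlackScholes

variable {K c S : ℝ}

/-- The Black–Scholes `d1`, written with the total volatility `c = σ√τ`. -/
noncomputable def bsD1 (K c S : ℝ) : ℝ := (log (S / K) + c ^ 2 / 2) / c

noncomputable def bsD2 (K c S : ℝ) : ℝ := bsD1 K c S - c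

noncomputable def bsPut (K c S : ℝ) : ℝ := K * Φ (-bsD2 K c S) - S * Φ (-bsD1 K c S)

lemma exp_bsD1_mul_sub (hK : 0 < K) (hS : 0 < S) (hc : c ≠ 0) :
    exp (bsD1 K c S * c - c ^ 2 / 2) = S / K := by
  rw [bsD1, div_mul_cancel₀ _ hc, add_sub_cancel_right, exp_log (div_pos hS hK)]

lemma mul_φ_neg_bsD2 (hK : 0 < K) (hS : 0 < S) (hc : c ≠ 0) :
    K * φ (-bsD2 K c S) = S * φ (-bsD1 K c S) := by
  rw [bsD2, φ_neg, φ_neg, φ_sub_eq_exp_mul, exp_bsD1_mul_sub hK hS hc]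
  field_simp

lemma bsPut_pos (hK : 0 < K) (hS : 0 < S) (hc : 0 < c) : 0 < bsPut K c S := by
  have h := Φ_lt_exp_mul_Φ_add (-bsD1 K c S) hc
  rw [show -bsD1 K c S * c + c ^ 2 / 2 = -(bsD1 K c S * c - c ^ 2 / 2) by ring, exp_neg,
    exp_bsD1_mul_sub hK hS hc.ne', inv_div, neg_add_eq_sub, ← neg_sub, ← bsD2] at h
  rw [bsPut, sub_pos]
  calc S * Φ (-bsD1 K c S) < S * (K / S * Φ (-bsD2 K c S)) := by gcongr
    _ = K * Φ (-bsD2 K c S) := by field_simp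

lemma hasDerivAt_bsD1 (hK : K ≠ 0) (hS : S ≠ 0) : HasDerivAt (bsD1 K c) (S⁻¹ / c) S := by
  have h := ((((hasDerivAt_id S).div_const K).log (div_ne_zero hS hK)).add_const
    (c ^ 2 / 2)).div_const c
  rwa [id, div_div_div_cancel_right₀ hK, one_div] at h

lemma hasDerivAt_bsPut (hK : 0 < K) (hS : 0 < S) (hc : c ≠ 0) :
    HasDerivAt (bsPut K c) (-Φ (-bsD1 K c S)) S := by
  have hd1 := hasDerivAt_bsD1 (c := c) hK.ne' hS.ne'
  have hd2 : HasDerivAt (bsD2 K c) (S⁻¹ / c) S := hd1.sub_const c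
  have h := (((hasDerivAt_Φ _).comp S hd2.neg).const_mul K).sub
    ((hasDerivAt_id S).mul ((hasDerivAt_Φ _).comp S hd1.neg))
  refine h.congr_deriv ?_
  have hφ := mul_φ_neg_bsD2 hK hS hc
  simp only [Pi.neg_apply, Function.comp_apply, id, one_mul]
  linear_combination -(S⁻¹ / c) * hφ

lemma strictAntiOn_sub_div_bsPut (hK : 0 < K) (hc : 0 < c) :
    StrictAntiOn (fun S ↦ (K - S) / bsPut K c S) (Ioi 0) := by
  have hderiv (S : ℝ) (hS : 0 < S) : HasDerivAt (fun S ↦ (K - S) / bsPut K c S)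
      (K * (Φ (-bsD1 K c S) - Φ (-bsD2 K c S)) / bsPut K c S ^ 2) S := by
    refine (((hasDerivAt_id S).const_sub K).div (hasDerivAt_bsPut hK hS hc.ne')
      (bsPut_pos hK hS hc).ne').congr_deriv ?_
    simp only [bsPut, neg_sub, neg_mul, one_mul, id_eq, mul_neg, sub_neg_eq_add]
    ring
  refine strictAntiOn_of_deriv_neg (convex_Ioi 0)
    (fun S hS ↦ (hderiv S hS).continuousAt.continuousWithinAt) fun S hS ↦ ?_
  rw [interior_Ioi] at hS
  rw [(hderiv S hS).deriv]
  have hΦ : Φ (-bsD1 K c S) < Φ (-bsD2 K c S) := Φ_strictMono (by simp [bsD2, hc])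
  have hV := bsPut_pos hK hS hc
  exact div_neg_of_neg_of_pos (mul_neg_of_pos_of_neg hK (sub_neg.2 hΦ)) (by positivity)

end BlackScholes

/-- The put-hedging ratio α(S) = x·(K − S)/V_put(S) is strictly decreasing on (0, ∞). -/
theorem alpha_strictAnti (K σ τ x : ℝ) (hK : 0 < K) (hσ : 0 < σ) (hτ : 0 < τ)
    (hx : 0 < x)
    (d1 d2 α : ℝ → ℝ)
    (hd1 : ∀ S, d1 S = (Real.log (S / K) + (σ ^ 2 / 2) * τ) / (σ * Real.sqrt τ))
    (hd2 : ∀ S, d2 S = d1 S - σ * Real.sqrt τ)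
    (hα : ∀ S, α S = x * (K - S) / (K * Φ (-(d2 S)) - S * Φ (-(d1 S)))) :
    ∀ S₁ S₂ : ℝ, 0 < S₁ → S₁ < S₂ → α S₂ < α S₁ := by
  set c := σ * √τ
  have hc : 0 < c := mul_pos hσ (sqrt_pos.2 hτ)
  have hd1c (S : ℝ) : d1 S = bsD1 K c S := by
    rw [hd1, bsD1, mul_pow, sq_sqrt hτ.le]
    ring
  have hαc (S : ℝ) : α S = x * ((K - S) / bsPut K c S) := by
    rw [hα, hd2, hd1c, bsPut, bsD2, mul_div_assoc]
  intro S₁ S₂ hS₁ hS₁₂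
  rw [hαc, hαc]
  exact mul_lt_mul_of_pos_left
    (strictAntiOn_sub_div_bsPut hK hc hS₁ (hS₁.trans hS₁₂ : 0 < S₂) hS₁₂) hx
end
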